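/- arXiv:1905.05630 — 2 statements merged into one kernel-verified Lean document; each statement's English description precedes it below -/
import Mathlib

section
/- For all X, Y ∈ 𝒞 and all g ∈ G, the Fourier coefficients satisfy π(L_g*(X ⋆ Y)) = π(L_g*X)·π(L_g*Y); that is, the g-th Fourier coefficient of the Hadamard product X ⋆ Y is the product of the g-th Fourier coefficients of X and Y. -/
set_option synthInstance.maxHeartbeats 1000000
set_option maxHeartbeats 1000000

open scoped InnerProductSpace
open ContinuousLinearMap

noncomputable section

/-- `l2 G H` is the Hilbert space `ℓ²(G,H)` of square-summable `H`-valued functions on `G`. -/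
abbrev l2 (G : Type) (H : Type) [NormedAddCommGroup H] : Type := lp (fun _ : G => H) 2

/-- The Hadamard product `X ⋆ Y := V* ∘ ρ(X) ∘ F ∘ ρ(Y) ∘ V`. -/
def hadamard {H : Type} [NormedAddCommGroup H] [InnerProductSpace ℂ H] [CompleteSpace H]
    {G : Type}
    (ρ : (l2 G H →L[ℂ] l2 G H) → (l2 G (l2 G H) →L[ℂ] l2 G (l2 G H)))
    (V : l2 G H →L[ℂ] l2 G (l2 G H))
    (F : l2 G (l2 G H) →L[ℂ] l2 G (l2 G H))
    (X Y : l2 G H →L[ℂ] l2 G H) : l2 G H →L[ℂ] l2 G H :=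
  adjoint V ∘L (ρ X ∘L (F ∘L (ρ Y ∘L V)))

set_option linter.unusedSectionVars false

section Aux

variable {H : Type} [NormedAddCommGroup H] [InnerProductSpace ℂ H] [CompleteSpace H]
  {G : Type} [DecidableEq G]

lemma single_zero (g : G) : lp.single 2 g (0 : H) = (0 : l2 G H) := by
  refine lp.ext (funext fun j => ?_)
  rw [lp.single_apply, Pi.single_apply]
  split
  · rename_i h; subst h; rfl
  · rfl

-- diagonal formula for π
lemma pi_apply
    (π : (l2 G H →L[ℂ] l2 G H) → (l2 G H →L[ℂ] l2 G H))
    (hπ : ∀ (X : l2 G H →L[ℂ] l2 G H) (ξ η : l2 G H), ⟪π X ξ, η⟫_ℂ =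
      ∑' g : G, ⟪X (lp.single 2 g ((ξ : ∀ _ : G, H) g)),
        lp.single 2 g ((η : ∀ _ : G, H) g)⟫_ℂ)
    (Z : l2 G H →L[ℂ] l2 G H) (ξ : l2 G H) (k : G) :
    (π Z ξ : ∀ _ : G, H) k = (Z (lp.single 2 k ((ξ : ∀ _ : G, H) k)) : ∀ _ : G, H) k := by
  apply ext_inner_right ℂ
  intro w
  have h1 : ⟪(π Z ξ : ∀ _ : G, H) k, w⟫_ℂ = ⟪π Z ξ, lp.single 2 k w⟫_ℂ :=
    (lp.inner_single_right (𝕜 := ℂ) k w (π Z ξ)).symm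
  rw [h1, hπ]
  rw [tsum_eq_single k]
  · rw [show ((lp.single 2 k w : l2 G H) : ∀ _ : G, H) k = w from lp.single_apply_self (E := fun _ : G => H) 2 k w,
      lp.inner_single_right]
  · intro b hb
    rw [show ((lp.single 2 k w : l2 G H) : ∀ _ : G, H) b = 0 from lp.single_apply_ne (E := fun _ : G => H) 2 k w hb,
      single_zero, inner_zero_right]

variable [Group G]

lemma star_L_apply
    (L : G → (l2 G H →L[ℂ] l2 G H))
    (hL : ∀ (g : G) (ξ : l2 G H) (h : G),
      (L g ξ : ∀ _ : G, H) h = (ξ : ∀ _ : G, H) (g⁻¹ * h))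
    (g : G) (ξ : l2 G H) (k : G) :
    (star (L g) ξ : ∀ _ : G, H) k = (ξ : ∀ _ : G, H) (g * k) := by
  have hstar : star (L g) = L g⁻¹ := by
    rw [star_eq_adjoint, ← (eq_adjoint_iff (L g⁻¹) (L g)).mpr]
    intro x y
    rw [lp.inner_eq_tsum (𝕜 := ℂ), lp.inner_eq_tsum (𝕜 := ℂ)]
    rw [← Equiv.tsum_eq (Equiv.mulLeft g) (fun h => ⟪(x : ∀ _ : G, H) h, (L g y : ∀ _ : G, H) h⟫_ℂ)]
    congr 1
    funext h
    rw [hL g⁻¹, hL g]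
    simp [Equiv.coe_mulLeft]
  rw [hstar, hL]
  simp

lemma adjointV_apply
    (V : l2 G H →L[ℂ] l2 G (l2 G H))
    (hV : ∀ (ξ : l2 G H) (g : G),
      (V ξ : ∀ _ : G, l2 G H) g = lp.single 2 g ((ξ : ∀ _ : G, H) g))
    (Ξ : l2 G (l2 G H)) (k : G) :
    ((adjoint V Ξ : l2 G H) : ∀ _ : G, H) k
      = (((Ξ : ∀ _ : G, l2 G H) k : l2 G H) : ∀ _ : G, H) k := by
  apply ext_inner_right ℂ
  intro w
  rw [(lp.inner_single_right (𝕜 := ℂ) k w (adjoint V Ξ)).symm.symm.symm]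
  rw [adjoint_inner_left]
  have hVs : V (lp.single 2 k w) = lp.single 2 k (lp.single 2 k w) := by
    refine lp.ext (funext fun j => ?_)
    rw [hV]
    by_cases hj : j = k
    · subst hj
      rw [lp.single_apply_self (E := fun _ : G => H) 2 j w,
        lp.single_apply_self (E := fun _ : G => l2 G H) 2 j (lp.single 2 j w)]
    · rw [lp.single_apply_ne (E := fun _ : G => H) 2 k w hj,
        lp.single_apply_ne (E := fun _ : G => l2 G H) 2 k _ hj, single_zero]
  rw [hVs, lp.inner_single_right (𝕜 := ℂ), lp.inner_single_right (𝕜 := ℂ)]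

lemma V_single
    (V : l2 G H →L[ℂ] l2 G (l2 G H))
    (hV : ∀ (ξ : l2 G H) (g : G),
      (V ξ : ∀ _ : G, l2 G H) g = lp.single 2 g ((ξ : ∀ _ : G, H) g))
    (k : G) (v : H) :
    V (lp.single 2 k v) = lp.single 2 k (lp.single 2 k v) := by
  refine lp.ext (funext fun j => ?_)
  rw [hV]
  by_cases hj : j = k
  · subst hj
    rw [lp.single_apply_self (E := fun _ : G => H) 2 j v,
      lp.single_apply_self (E := fun _ : G => l2 G H) 2 j (lp.single 2 j v)]
  · rw [lp.single_apply_ne (E := fun _ : G => H) 2 k v hj,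
      lp.single_apply_ne (E := fun _ : G => l2 G H) 2 k _ hj, single_zero]

lemma had_single
    (ρ : (l2 G H →L[ℂ] l2 G H) → (l2 G (l2 G H) →L[ℂ] l2 G (l2 G H)))
    (hρ : ∀ (X : l2 G H →L[ℂ] l2 G H) (Ξ : l2 G (l2 G H)) (g : G),
      (ρ X Ξ : ∀ _ : G, l2 G H) g = X ((Ξ : ∀ _ : G, l2 G H) g))
    (V : l2 G H →L[ℂ] l2 G (l2 G H))
    (hV : ∀ (ξ : l2 G H) (g : G),
      (V ξ : ∀ _ : G, l2 G H) g = lp.single 2 g ((ξ : ∀ _ : G, H) g))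
    (F : l2 G (l2 G H) →L[ℂ] l2 G (l2 G H))
    (hF : ∀ (Ξ : l2 G (l2 G H)) (g h : G),
      ((F Ξ : ∀ _ : G, l2 G H) g : ∀ _ : G, H) h
        = ((Ξ : ∀ _ : G, l2 G H) h : ∀ _ : G, H) g)
    (X Y : l2 G H →L[ℂ] l2 G H) (k : G) (v : H) (m : G) :
    (((adjoint V ∘L (ρ X ∘L (F ∘L (ρ Y ∘L V)))) (lp.single 2 k v) : l2 G H) : ∀ _ : G, H) m
      = (X (lp.single 2 k ((Y (lp.single 2 k v) : ∀ _ : G, H) m)) : ∀ _ : G, H) m := by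
  simp only [ContinuousLinearMap.comp_apply]
  rw [adjointV_apply V hV, hρ]
  have h2 : ((F (ρ Y (V (lp.single 2 k v))) : l2 G (l2 G H)) : ∀ _ : G, l2 G H) m
      = lp.single 2 k ((Y (lp.single 2 k v) : ∀ _ : G, H) m) := by
    refine lp.ext (funext fun h => ?_)
    rw [hF, hρ, V_single V hV]
    by_cases hh : h = k
    · subst hh
      rw [lp.single_apply_self (E := fun _ : G => l2 G H) 2 h (lp.single 2 h v),
        lp.single_apply_self (E := fun _ : G => H) 2 h _]
    · rw [lp.single_apply_ne (E := fun _ : G => l2 G H) 2 k _ hh, map_zero,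
        lp.single_apply_ne (E := fun _ : G => H) 2 k _ hh]
      rfl
  rw [h2]


end Aux

theorem hadamard_stmt9
    {H : Type} [NormedAddCommGroup H] [InnerProductSpace ℂ H] [CompleteSpace H]
    {G : Type} [Group G] [DecidableEq G]
    (𝒜 : StarSubalgebra ℂ (H →L[ℂ] H))
    (h𝒜 : IsClosed (𝒜 : Set (H →L[ℂ] H)))
    (hnd : Dense (↑(Submodule.span ℂ {v : H | ∃ A ∈ 𝒜, ∃ w : H, v = A w}) : Set H))
    (α : G → (𝒜 ≃⋆ₐ[ℂ] 𝒜))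
    (hα1 : ∀ A, α 1 A = A)
    (hαmul : ∀ g h A, α (g * h) A = α g (α h A))
    (Ψ : 𝒜 → (l2 G H →L[ℂ] l2 G H))
    (hΨ : ∀ (A : 𝒜) (ξ : l2 G H) (g : G),
      (Ψ A ξ : ∀ _ : G, H) g = ((α g⁻¹ A : 𝒜) : H →L[ℂ] H) ((ξ : ∀ _ : G, H) g))
    (L : G → (l2 G H →L[ℂ] l2 G H))
    (hL : ∀ (g : G) (ξ : l2 G H) (h : G),
      (L g ξ : ∀ _ : G, H) h = (ξ : ∀ _ : G, H) (g⁻¹ * h))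
    (𝒞 : Set (l2 G H →L[ℂ] l2 G H))
    (h𝒞 : 𝒞 = ((StarAlgebra.adjoin ℂ
        (Set.range Ψ ∪ Set.range L)).topologicalClosure : Set _))
    (π : (l2 G H →L[ℂ] l2 G H) → (l2 G H →L[ℂ] l2 G H))
    (hπ : ∀ (X : l2 G H →L[ℂ] l2 G H) (ξ η : l2 G H), ⟪π X ξ, η⟫_ℂ =
      ∑' g : G, ⟪X (lp.single 2 g ((ξ : ∀ _ : G, H) g)),
        lp.single 2 g ((η : ∀ _ : G, H) g)⟫_ℂ)
    (ρ : (l2 G H →L[ℂ] l2 G H) → (l2 G (l2 G H) →L[ℂ] l2 G (l2 G H)))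
    (hρ : ∀ (X : l2 G H →L[ℂ] l2 G H) (Ξ : l2 G (l2 G H)) (g : G),
      (ρ X Ξ : ∀ _ : G, l2 G H) g = X ((Ξ : ∀ _ : G, l2 G H) g))
    (V : l2 G H →L[ℂ] l2 G (l2 G H))
    (hV : ∀ (ξ : l2 G H) (g : G),
      (V ξ : ∀ _ : G, l2 G H) g = lp.single 2 g ((ξ : ∀ _ : G, H) g))
    (F : l2 G (l2 G H) →L[ℂ] l2 G (l2 G H))
    (hF : ∀ (Ξ : l2 G (l2 G H)) (g h : G),
      ((F Ξ : ∀ _ : G, l2 G H) g : ∀ _ : G, H) h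
        = ((Ξ : ∀ _ : G, l2 G H) h : ∀ _ : G, H) g)
    :
    ∀ X ∈ 𝒞, ∀ Y ∈ 𝒞, ∀ g : G,
      π (star (L g) * hadamard ρ V F X Y)
        = π (star (L g) * X) * π (star (L g) * Y) := by
  intro X _ Y _ g
  unfold hadamard
  refine ContinuousLinearMap.ext fun ξ => ?_
  refine lp.ext (E := fun _ : G => H) (p := 2) (funext fun k => ?_)
  rw [ContinuousLinearMap.mul_apply, pi_apply π hπ, pi_apply π hπ,
    ContinuousLinearMap.mul_apply, ContinuousLinearMap.mul_apply,
    star_L_apply L hL, star_L_apply L hL, pi_apply π hπ,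
    ContinuousLinearMap.mul_apply, star_L_apply L hL,
    had_single ρ hρ V hV F hF]
end
end

section
/- For every X ∈ 𝒞, one has the operator inequalities −π(X*X) ≤ X* ⋆ X ≤ π(X*X) in the order on self-adjoint bounded operators on ℓ²(G,H). -/
set_option synthInstance.maxHeartbeats 1000000
set_option maxHeartbeats 1000000

open scoped InnerProductSpace
open ContinuousLinearMap

noncomputable section

section aux
variable {H : Type} [NormedAddCommGroup H] [InnerProductSpace ℂ H] [CompleteSpace H] {G : Type}

lemma l2_sq_summable (ξ : l2 G H) : Summable (fun g : G => ‖(ξ : ∀ _ : G, H) g‖ ^ 2) := by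
  have h := lp.memℓp ξ
  rw [memℓp_gen_iff (by norm_num)] at h
  simpa using h

lemma l2_sq_tsum (ξ : l2 G H) : ∑' g : G, ‖(ξ : ∀ _ : G, H) g‖ ^ 2 = ‖ξ‖ ^ 2 := by
  have h := lp.norm_rpow_eq_tsum (p := 2) (by norm_num) ξ
  simpa using h.symm

lemma l2_sq_summable_prod (Ξ : l2 G (l2 G H)) :
    Summable (fun p : G × G =>
      ‖((Ξ : ∀ _ : G, l2 G H) p.1 : ∀ _ : G, H) p.2‖ ^ 2) := by
  have key := summable_prod_of_nonneg
    (f := fun p : G × G => ‖((Ξ : ∀ _ : G, l2 G H) p.1 : ∀ _ : G, H) p.2‖ ^ 2)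
    (fun p => by positivity)
  have h1 : ∀ g : G, Summable (fun h : G =>
      ‖((Ξ : ∀ _ : G, l2 G H) g : ∀ _ : G, H) h‖ ^ 2) := fun g => l2_sq_summable _
  have h2 : Summable (fun g : G =>
      ∑' h : G, ‖((Ξ : ∀ _ : G, l2 G H) g : ∀ _ : G, H) h‖ ^ 2) := by
    have : (fun g : G => ∑' h : G, ‖((Ξ : ∀ _ : G, l2 G H) g : ∀ _ : G, H) h‖ ^ 2)
        = fun g : G => ‖(Ξ : ∀ _ : G, l2 G H) g‖ ^ 2 := by
      funext g; exact l2_sq_tsum _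
    rw [this]
    exact l2_sq_summable Ξ
  exact key.mpr ⟨h1, h2⟩

lemma inner_summable_prod (Ξ Η : l2 G (l2 G H)) :
    Summable (fun p : G × G =>
      ⟪((Ξ : ∀ _ : G, l2 G H) p.2 : ∀ _ : G, H) p.1,
        ((Η : ∀ _ : G, l2 G H) p.1 : ∀ _ : G, H) p.2⟫_ℂ) := by
  apply Summable.of_norm
  have hΞ : Summable (fun p : G × G =>
      ‖((Ξ : ∀ _ : G, l2 G H) p.2 : ∀ _ : G, H) p.1‖ ^ 2) :=
    (Equiv.prodComm G G).summable_iff.mpr (l2_sq_summable_prod Ξ)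
  have hΗ := l2_sq_summable_prod Η
  refine Summable.of_nonneg_of_le (fun p => norm_nonneg _)
    (fun p => ?_) ((hΞ.add hΗ).div_const 2)
  · have h1 := norm_inner_le_norm (𝕜 := ℂ)
      (((Ξ : ∀ _ : G, l2 G H) p.2 : ∀ _ : G, H) p.1)
      (((Η : ∀ _ : G, l2 G H) p.1 : ∀ _ : G, H) p.2)
    nlinarith [sq_nonneg (‖((Ξ : ∀ _ : G, l2 G H) p.2 : ∀ _ : G, H) p.1‖
      - ‖((Η : ∀ _ : G, l2 G H) p.1 : ∀ _ : G, H) p.2‖)]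

lemma F_inner_eq (F : l2 G (l2 G H) →L[ℂ] l2 G (l2 G H))
    (hF : ∀ (Ξ : l2 G (l2 G H)) (g h : G),
      ((F Ξ : ∀ _ : G, l2 G H) g : ∀ _ : G, H) h
        = ((Ξ : ∀ _ : G, l2 G H) h : ∀ _ : G, H) g)
    (Ξ Η : l2 G (l2 G H)) :
    ⟪F Ξ, Η⟫_ℂ = ∑' p : G × G,
      ⟪((Ξ : ∀ _ : G, l2 G H) p.2 : ∀ _ : G, H) p.1,
        ((Η : ∀ _ : G, l2 G H) p.1 : ∀ _ : G, H) p.2⟫_ℂ := by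
  rw [lp.inner_eq_tsum,
    Summable.tsum_prod' (inner_summable_prod Ξ Η) (fun g => by
      have := lp.summable_inner (𝕜 := ℂ) ((F Ξ : ∀ _ : G, l2 G H) g) ((Η : ∀ _ : G, l2 G H) g)
      simp only [hF] at this
      exact this)]
  congr 1
  funext g
  rw [lp.inner_eq_tsum]
  congr 1
  funext h
  rw [hF]

lemma F_selfAdjoint (F : l2 G (l2 G H) →L[ℂ] l2 G (l2 G H))
    (hF : ∀ (Ξ : l2 G (l2 G H)) (g h : G),
      ((F Ξ : ∀ _ : G, l2 G H) g : ∀ _ : G, H) h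
        = ((Ξ : ∀ _ : G, l2 G H) h : ∀ _ : G, H) g)
    (Ξ Η : l2 G (l2 G H)) : ⟪F Ξ, Η⟫_ℂ = ⟪Ξ, F Η⟫_ℂ := by
  have h1 := F_inner_eq F hF Ξ Η
  have h2 := F_inner_eq F hF Η Ξ
  have h3 : ⟪Ξ, F Η⟫_ℂ = star ⟪F Η, Ξ⟫_ℂ := (inner_conj_symm _ _).symm
  rw [h1, h3, h2, tsum_star]
  rw [← Equiv.tsum_eq (Equiv.prodComm G G)
    (fun p : G × G => star ⟪((Η : ∀ _ : G, l2 G H) p.2 : ∀ _ : G, H) p.1,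
      ((Ξ : ∀ _ : G, l2 G H) p.1 : ∀ _ : G, H) p.2⟫_ℂ)]
  congr 1
  funext p
  simp

lemma F_norm_eq (F : l2 G (l2 G H) →L[ℂ] l2 G (l2 G H))
    (hF : ∀ (Ξ : l2 G (l2 G H)) (g h : G),
      ((F Ξ : ∀ _ : G, l2 G H) g : ∀ _ : G, H) h
        = ((Ξ : ∀ _ : G, l2 G H) h : ∀ _ : G, H) g)
    (Ξ : l2 G (l2 G H)) : ‖F Ξ‖ = ‖Ξ‖ := by
  have hFF : F (F Ξ) = Ξ := by
    apply lp.ext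
    funext g
    apply lp.ext
    funext h
    rw [hF, hF]
  have h1 : ⟪F Ξ, F Ξ⟫_ℂ = ⟪Ξ, Ξ⟫_ℂ := by
    rw [F_selfAdjoint F hF Ξ (F Ξ), hFF]
  have h2 : ‖F Ξ‖ ^ 2 = ‖Ξ‖ ^ 2 := by
    rw [← inner_self_eq_norm_sq (𝕜 := ℂ), ← inner_self_eq_norm_sq (𝕜 := ℂ), h1]
  have := congrArg Real.sqrt h2
  simpa [Real.sqrt_sq, norm_nonneg] using this

end aux

theorem hadamard_stmt15
    {H : Type} [NormedAddCommGroup H] [InnerProductSpace ℂ H] [CompleteSpace H]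
    {G : Type} [Group G] [DecidableEq G]
    (𝒜 : StarSubalgebra ℂ (H →L[ℂ] H))
    (h𝒜 : IsClosed (𝒜 : Set (H →L[ℂ] H)))
    (hnd : Dense (↑(Submodule.span ℂ {v : H | ∃ A ∈ 𝒜, ∃ w : H, v = A w}) : Set H))
    (α : G → (𝒜 ≃⋆ₐ[ℂ] 𝒜))
    (hα1 : ∀ A, α 1 A = A)
    (hαmul : ∀ g h A, α (g * h) A = α g (α h A))
    (Ψ : 𝒜 → (l2 G H →L[ℂ] l2 G H))
    (hΨ : ∀ (A : 𝒜) (ξ : l2 G H) (g : G),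
      (Ψ A ξ : ∀ _ : G, H) g = ((α g⁻¹ A : 𝒜) : H →L[ℂ] H) ((ξ : ∀ _ : G, H) g))
    (L : G → (l2 G H →L[ℂ] l2 G H))
    (hL : ∀ (g : G) (ξ : l2 G H) (h : G),
      (L g ξ : ∀ _ : G, H) h = (ξ : ∀ _ : G, H) (g⁻¹ * h))
    (𝒞 : Set (l2 G H →L[ℂ] l2 G H))
    (h𝒞 : 𝒞 = ((StarAlgebra.adjoin ℂ
        (Set.range Ψ ∪ Set.range L)).topologicalClosure : Set _))
    (π : (l2 G H →L[ℂ] l2 G H) → (l2 G H →L[ℂ] l2 G H))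
    (hπ : ∀ (X : l2 G H →L[ℂ] l2 G H) (ξ η : l2 G H), ⟪π X ξ, η⟫_ℂ =
      ∑' g : G, ⟪X (lp.single 2 g ((ξ : ∀ _ : G, H) g)),
        lp.single 2 g ((η : ∀ _ : G, H) g)⟫_ℂ)
    (ρ : (l2 G H →L[ℂ] l2 G H) → (l2 G (l2 G H) →L[ℂ] l2 G (l2 G H)))
    (hρ : ∀ (X : l2 G H →L[ℂ] l2 G H) (Ξ : l2 G (l2 G H)) (g : G),
      (ρ X Ξ : ∀ _ : G, l2 G H) g = X ((Ξ : ∀ _ : G, l2 G H) g))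
    (V : l2 G H →L[ℂ] l2 G (l2 G H))
    (hV : ∀ (ξ : l2 G H) (g : G),
      (V ξ : ∀ _ : G, l2 G H) g = lp.single 2 g ((ξ : ∀ _ : G, H) g))
    (F : l2 G (l2 G H) →L[ℂ] l2 G (l2 G H))
    (hF : ∀ (Ξ : l2 G (l2 G H)) (g h : G),
      ((F Ξ : ∀ _ : G, l2 G H) g : ∀ _ : G, H) h
        = ((Ξ : ∀ _ : G, l2 G H) h : ∀ _ : G, H) g)
    :
    ∀ X ∈ 𝒞,
      -(π (star X * X)) ≤ hadamard ρ V F (star X) X ∧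
      hadamard ρ V F (star X) X ≤ π (star X * X) := by
  intro X _
  set T : l2 G H →L[ℂ] l2 G (l2 G H) := ρ X ∘L V with hT
  -- ρ of star is the adjoint
  have hρstar : ρ (star X) = adjoint (ρ X) := by
    rw [eq_adjoint_iff]
    intro Ξ Η
    rw [lp.inner_eq_tsum, lp.inner_eq_tsum]
    congr 1
    funext g
    rw [hρ, hρ, ContinuousLinearMap.star_eq_adjoint, adjoint_inner_left]
  -- inner product formula for the Hadamard product
  have hhad : ∀ ξ η : l2 G H,
      ⟪hadamard ρ V F (star X) X ξ, η⟫_ℂ = ⟪F (T ξ), T η⟫_ℂ := by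
    intro ξ η
    simp only [hadamard, comp_apply]
    rw [adjoint_inner_left, hρstar, adjoint_inner_left]
    simp only [hT, comp_apply]
  -- inner product formula for π (star X * X)
  have hTg : ∀ (ζ : l2 G H) (g : G),
      (T ζ : ∀ _ : G, l2 G H) g = X (lp.single 2 g ((ζ : ∀ _ : G, H) g)) := by
    intro ζ g
    simp only [hT, comp_apply]
    rw [hρ, hV]
  have hπT : ∀ ξ η : l2 G H, ⟪π (star X * X) ξ, η⟫_ℂ = ⟪T ξ, T η⟫_ℂ := by
    intro ξ η
    rw [hπ, lp.inner_eq_tsum]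
    congr 1
    funext g
    rw [hTg, hTg, ContinuousLinearMap.mul_apply, ContinuousLinearMap.star_eq_adjoint,
      adjoint_inner_left]
  -- self-adjointness
  have hself_π : IsSelfAdjoint (π (star X * X)) := by
    rw [isSelfAdjoint_iff_isSymmetric]
    intro ξ η
    show ⟪π (star X * X) ξ, η⟫_ℂ = ⟪ξ, π (star X * X) η⟫_ℂ
    rw [hπT, ← inner_conj_symm ξ (π (star X * X) η), hπT, inner_conj_symm]
  have hself_had : IsSelfAdjoint (hadamard ρ V F (star X) X) := by
    rw [isSelfAdjoint_iff_isSymmetric]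
    intro ξ η
    show ⟪hadamard ρ V F (star X) X ξ, η⟫_ℂ = ⟪ξ, hadamard ρ V F (star X) X η⟫_ℂ
    rw [hhad, ← inner_conj_symm ξ (hadamard ρ V F (star X) X η), hhad,
      inner_conj_symm, F_selfAdjoint F hF]
  -- the key real estimate
  have hkey : ∀ ξ : l2 G H, |RCLike.re ⟪F (T ξ), T ξ⟫_ℂ| ≤ RCLike.re ⟪T ξ, T ξ⟫_ℂ := by
    intro ξ
    have h1 : ‖⟪F (T ξ), T ξ⟫_ℂ‖ ≤ ‖F (T ξ)‖ * ‖T ξ‖ := norm_inner_le_norm _ _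
    rw [F_norm_eq F hF] at h1
    have h2 : |RCLike.re ⟪F (T ξ), T ξ⟫_ℂ| ≤ ‖⟪F (T ξ), T ξ⟫_ℂ‖ := RCLike.abs_re_le_norm _
    have h3 : RCLike.re ⟪T ξ, T ξ⟫_ℂ = ‖T ξ‖ ^ 2 := inner_self_eq_norm_sq _
    rw [h3]
    nlinarith [norm_nonneg (T ξ)]
  constructor
  · rw [ContinuousLinearMap.le_def, sub_neg_eq_add]
    refine ⟨(hself_had.add hself_π).isSymmetric, fun ξ => ?_⟩
    rw [ContinuousLinearMap.reApplyInnerSelf_apply, ContinuousLinearMap.add_apply,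
      inner_add_left, map_add, hhad, hπT]
    have := hkey ξ
    have := abs_le.mp this
    linarith [this.1]
  · rw [ContinuousLinearMap.le_def]
    refine ⟨(hself_π.sub hself_had).isSymmetric, fun ξ => ?_⟩
    rw [ContinuousLinearMap.reApplyInnerSelf_apply, ContinuousLinearMap.sub_apply,
      inner_sub_left, map_sub, hhad, hπT]
    have := abs_le.mp (hkey ξ)
    linarith [this.2]
end
end
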